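/- Let G be a 3-edge-connected graph with DFS tree T, let u and v be vertices not related as ancestor and descendant, and let w be a common ancestor of u and v. Then {(u,p(u)), (v,p(v)), (w,p(w))} is a 3-edge cut of G if and only if B(w) = B(u) ⊔ B(v). -/

import Mathlib

variable {V E : Type}

/-- Reachability in the multigraph with edge-endpoint map `ends`,
avoiding (i.e. after deleting) the edges in `S`. -/
def Reach (ends : E → V × V) (S : Set E) : V → V → Prop :=
  Relation.ReflTransGen (fun a b => ∃ e, e ∉ S ∧ (ends e = (a, b) ∨ ends e = (b, a)))

/-- The multigraph is connected. -/
def Connected (ends : E → V × V) : Prop := ∀ u v : V, Reach ends ∅ u v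

/-- `u` and `v` are `k`-edge-connected: no set of at most `k - 1` edges separates them. -/
def KConn (ends : E → V × V) (k : ℕ) (u v : V) : Prop :=
  ∀ S : Finset E, S.card ≤ k - 1 → Reach ends (↑S) u v

/-- The multigraph is `k`-edge-connected: no edge cut of size less than `k`. -/
def GraphKConn (ends : E → V × V) (k : ℕ) : Prop :=
  ∀ S : Finset E, S.card < k → ∀ u v : V, Reach ends (↑S) u v

/-- `S` is an edge cut: removing it disconnects the graph. -/
def IsCutSet (ends : E → V × V) (S : Set E) : Prop :=
  ∃ u v : V, ¬ Reach ends S u v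

/-- A (candidate) DFS tree on the multigraph `ends : E → V × V`: a root, a parent
function, a choice of a tree edge for each non-root vertex, and a preorder numbering. -/
structure DFSTree (V E : Type) where
  ends : E → V × V
  root : V
  parent : V → V
  treeEdge : V → E
  pre : V → ℕ

namespace DFSTree

variable (t : DFSTree V E)

/-- `t.Anc a b` : `a` is an ancestor of `b` (every vertex is an ancestor of itself). -/
def Anc (a b : V) : Prop :=
  Relation.ReflTransGen (fun x y => x ≠ t.root ∧ y = t.parent x) b a

/-- `a` is a proper ancestor of `b`. -/
def ProperAnc (a b : V) : Prop := t.Anc a b ∧ a ≠ b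

def IsTreeEdge (e : E) : Prop := ∃ v, v ≠ t.root ∧ e = t.treeEdge v

/-- The set `B(v)`: back-edges `(x, y)` with `x` a descendant of `v` and `y` a
proper ancestor of `v`. -/
def B (v : V) : Set E :=
  {e | ¬ t.IsTreeEdge e ∧ t.Anc v (t.ends e).1 ∧ t.ProperAnc (t.ends e).2 v}

/-- `m` is the nearest common ancestor of the set `S` of vertices. -/
def IsNCA (S : Set V) (m : V) : Prop :=
  (∀ x ∈ S, t.Anc m x) ∧ ∀ m' : V, (∀ x ∈ S, t.Anc m' x) → t.Anc m' m

/-- `m = M(v)`: the nearest common ancestor of all lower ends of back-edges in `B(v)`. -/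
def IsM (v m : V) : Prop := t.IsNCA {x | ∃ e ∈ t.B v, (t.ends e).1 = x} m

/-- `h = high(v)`: the highest (in preorder) upper end of a back-edge in `B(v)`. -/
def IsHigh (v h : V) : Prop :=
  (∃ e ∈ t.B v, (t.ends e).2 = h) ∧ ∀ e ∈ t.B v, t.pre (t.ends e).2 ≤ t.pre h

/-- `l = low(v)`: the lowest (in preorder) upper end of a back-edge in `B(v)`. -/
def IsLow (v l : V) : Prop :=
  (∃ e ∈ t.B v, (t.ends e).2 = l) ∧ ∀ e ∈ t.B v, t.pre l ≤ t.pre (t.ends e).2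

/-- `v` and `w` have the same `M`-value. -/
def SameM (v w : V) : Prop := ∃ m, t.IsM v m ∧ t.IsM w m

/-- `n = nextM(v)`: the greatest vertex smaller than `v` with the same `M`-value. -/
def IsNextM (v n : V) : Prop :=
  t.pre n < t.pre v ∧ t.SameM v n ∧
    ∀ z, t.pre z < t.pre v → t.SameM v z → t.pre z ≤ t.pre n

/-- `l = lastM(v)`: the smallest vertex with the same `M`-value as `v`. -/
def IsLastM (v l : V) : Prop :=
  t.SameM v l ∧ ∀ z, t.SameM v z → t.pre l ≤ t.pre z

/-- `t` really is a DFS spanning tree of the connected multigraph `ends`. -/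
structure IsDFS : Prop where
  conn : Connected t.ends
  parent_root : t.parent t.root = t.root
  tree_ends : ∀ v, v ≠ t.root → t.ends (t.treeEdge v) = (v, t.parent v)
  treeEdge_inj : ∀ v w, v ≠ t.root → w ≠ t.root → t.treeEdge v = t.treeEdge w → v = w
  back : ∀ e, ¬ t.IsTreeEdge e → t.Anc (t.ends e).2 (t.ends e).1
  pre_inj : Function.Injective t.pre
  pre_mono : ∀ a b, t.Anc a b → t.pre a ≤ t.pre b
  pre_interval : ∀ a b : V,
    t.pre a ≤ t.pre b → t.pre b < t.pre a + {x | t.Anc a x}.ncard → t.Anc a b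

end DFSTree

/-!
Deleting the tree edges above `u`, `v` and `w` splits `T` into four pieces that stay connected
through tree edges: `T(u)`, `T(v)`, `W = T(w) \ (T(u) ∪ T(v))` and the rest. A back-edge leaves `W`
exactly when it lies in one of `B(w)` and `B(u) ∪ B(v)` but not in the other, so
`B(w) = B(u) ∪ B(v)` says that `W` is a union of components of `G` minus the three edges, and then
they form a cut. Conversely, if they form a cut, 3-edge-connectivity forces each of them to join
two different components, which pins the component of `w` down to `W`.
-/

def SeparatedBy (ends : E → V × V) (S : Set E) (A : Set V) : Prop :=
  ∀ e ∉ S, ((ends e).1 ∈ A ↔ (ends e).2 ∈ A)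

section Reach

variable {ends : E → V × V} {S : Set E} {x y z : V}

theorem Reach.single {e : E} (he : e ∉ S) (h : ends e = (x, y)) : Reach ends S x y :=
  Relation.ReflTransGen.single ⟨e, he, Or.inl h⟩

theorem Reach.trans (hxy : Reach ends S x y) (hyz : Reach ends S y z) : Reach ends S x z :=
  Relation.ReflTransGen.trans hxy hyz

theorem Reach.symm (h : Reach ends S x y) : Reach ends S y x := by
  induction h with
  | refl => exact Relation.ReflTransGen.refl
  | tail _ hstep ih =>
    obtain ⟨e, he, hends⟩ := hstep
    exact Relation.ReflTransGen.head ⟨e, he, hends.symm⟩ ih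

theorem SeparatedBy.mem_of_reach {A : Set V} (hA : SeparatedBy ends S A) (hx : x ∈ A)
    (h : Reach ends S x y) : y ∈ A := by
  induction h with
  | refl => exact hx
  | tail _ hstep ih =>
    obtain ⟨e, he, hends | hends⟩ := hstep
    · simpa [hends] using (hA e he).1 (by simpa [hends] using ih)
    · simpa [hends] using (hA e he).2 (by simpa [hends] using ih)

theorem separatedBy_setOf_reach (x : V) : SeparatedBy ends S {y | Reach ends S x y} :=
  fun e he => ⟨fun h => h.trans (Reach.single he (Prod.mk.eta (p := ends e)).symm),
    fun h => h.trans (Reach.single he (Prod.mk.eta (p := ends e)).symm).symm⟩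

theorem GraphKConn.not_reach_of_isCutSet {k : ℕ} (hk : GraphKConn ends k) {F : Finset E}
    (hF : F.card ≤ k) (hcut : IsCutSet ends F) {e : E} (he : e ∈ F) :
    ¬ Reach ends F (ends e).1 (ends e).2 := by
  classical
  intro hreach
  obtain ⟨y, hy⟩ : ∃ y, ¬ Reach ends F (ends e).1 y := by
    obtain ⟨x, y, hxy⟩ := hcut
    by_contra! h
    exact hxy ((h x).symm.trans (h y))
  have hsep : SeparatedBy ends (F.erase e : Set E) {y | Reach ends F (ends e).1 y} := by
    intro e' he'
    by_cases h : e' = e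
    · subst h
      exact iff_of_true Relation.ReflTransGen.refl hreach
    · exact separatedBy_setOf_reach _ e' (by simpa [h] using he')
  have hcard : (F.erase e).card < k := by
    rw [Finset.card_erase_of_mem he]
    have := Finset.card_pos.2 ⟨e, he⟩
    omega
  exact hy (hsep.mem_of_reach Relation.ReflTransGen.refl (hk _ hcard _ y))

end Reach

namespace DFSTree

variable {t : DFSTree V E} {a b x z : V}

def subtree (t : DFSTree V E) (a : V) : Set V := {z | t.Anc a z}

@[simp]
theorem mem_subtree : z ∈ t.subtree a ↔ t.Anc a z := Iff.rfl

theorem anc_refl (a : V) : t.Anc a a := Relation.ReflTransGen.refl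

theorem anc_trans (hab : t.Anc a b) (hbz : t.Anc b z) : t.Anc a z :=
  Relation.ReflTransGen.trans hbz hab

theorem anc_parent (hx : x ≠ t.root) : t.Anc (t.parent x) x :=
  Relation.ReflTransGen.single ⟨hx, rfl⟩

theorem anc_of_anc_parent (hx : x ≠ t.root) (h : t.Anc a (t.parent x)) : t.Anc a x :=
  anc_trans h (anc_parent hx)

theorem anc_parent_of_anc_of_ne (h : t.Anc a x) (hne : a ≠ x) : t.Anc a (t.parent x) := by
  rcases h.cases_head with h | ⟨c, ⟨_, hc⟩, h⟩
  · exact absurd h.symm hne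
  · exact hc ▸ h

theorem anc_parent_iff (hx : x ≠ t.root) (hne : a ≠ x) : t.Anc a (t.parent x) ↔ t.Anc a x :=
  ⟨anc_of_anc_parent hx, fun h => anc_parent_of_anc_of_ne h hne⟩

theorem anc_total (ha : t.Anc a z) (hb : t.Anc b z) : t.Anc a b ∨ t.Anc b a := by
  induction ha with
  | refl => exact Or.inr hb
  | @tail c x _ hcx ih =>
    have hxc : t.Anc x c := Relation.ReflTransGen.single hcx
    rcases ih with h | h
    · exact Or.inl (anc_trans hxc h)
    · by_cases hbc : b = c
      · exact Or.inl (hbc ▸ hxc)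
      · exact Or.inr (hcx.2 ▸ anc_parent_of_anc_of_ne h hbc)

theorem eq_root_of_anc_root (h : t.Anc a t.root) : a = t.root := by
  rcases h.cases_head with h | ⟨c, ⟨hr, _⟩, _⟩
  · exact h.symm
  · exact absurd rfl hr

theorem IsDFS.anc_ends (ht : t.IsDFS) (e : E) : t.Anc (t.ends e).2 (t.ends e).1 := by
  by_cases he : t.IsTreeEdge e
  · obtain ⟨x, hx, rfl⟩ := he
    rw [ht.tree_ends x hx]
    exact anc_parent hx
  · exact ht.back e he

theorem IsDFS.anc_antisymm (ht : t.IsDFS) (hab : t.Anc a b) (hba : t.Anc b a) : a = b :=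
  ht.pre_inj (le_antisymm (ht.pre_mono a b hab) (ht.pre_mono b a hba))

theorem IsDFS.root_anc (ht : t.IsDFS) (z : V) : t.Anc t.root z := by
  induction ht.conn t.root z with
  | refl => exact anc_refl _
  | @tail c z _ hstep ih =>
    obtain ⟨e, -, hends | hends⟩ := hstep
    · have hzc : t.Anc z c := by simpa [hends] using ht.anc_ends e
      rcases anc_total ih hzc with h | h
      · exact h
      · exact eq_root_of_anc_root h ▸ anc_refl _
    · exact anc_trans ih (by simpa [hends] using ht.anc_ends e)

theorem IsDFS.not_anc_parent (ht : t.IsDFS) (hx : x ≠ t.root) : ¬ t.Anc x (t.parent x) := by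
  intro h
  have hfix : t.parent x = x := (ht.anc_antisymm h (anc_parent hx)).symm
  have hanc : ∀ y, t.Anc y x → y = x := by
    intro y hy
    induction hy with
    | refl => rfl
    | tail _ hstep ih => rw [hstep.2, ih, hfix]
  exact hx (hanc _ (ht.root_anc x)).symm

theorem IsDFS.mem_B_iff (ht : t.IsDFS) {e : E} (he : ¬ t.IsTreeEdge e) :
    e ∈ t.B a ↔ (t.ends e).1 ∈ t.subtree a ∧ (t.ends e).2 ∉ t.subtree a := by
  have hanc := ht.anc_ends e
  simp only [B, ProperAnc, Set.mem_ofPred_eq, mem_subtree, he, not_false_eq_true, true_and]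
  refine ⟨fun ⟨h1, h2, hne⟩ => ⟨h1, fun h => hne (ht.anc_antisymm h2 h)⟩, fun ⟨h1, h2⟩ => ?_⟩
  rcases anc_total h1 hanc with h | h
  · exact absurd h h2
  · exact ⟨h1, h, fun heq => h2 (heq ▸ anc_refl _)⟩

theorem IsDFS.reach_of_anc (ht : t.IsDFS) {X : Set V} (hX : t.root ∉ X) (haz : t.Anc a z)
    (hpath : ∀ x ∈ X, t.Anc a x → t.Anc x z → x = a) :
    Reach t.ends (t.treeEdge '' X) z a := by
  induction haz using Relation.ReflTransGen.head_induction_on with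
  | refl => exact Relation.ReflTransGen.refl
  | @head z y hzy hya ih =>
    obtain ⟨hz, rfl⟩ := hzy
    refine (Reach.single ?_ (ht.tree_ends z hz)).trans
      (ih fun x hx hax hxz => hpath x hx hax (anc_trans hxz (anc_parent hz)))
    rintro ⟨x, hxX, hxz⟩
    have hx : x ≠ t.root := fun h => hX (h ▸ hxX)
    obtain rfl := ht.treeEdge_inj x z hx hz hxz
    exact ht.not_anc_parent hz (hpath x hxX (anc_of_anc_parent hx hya) (anc_refl x) ▸ hya)

theorem IsDFS.reach_of_mem_subtree (ht : t.IsDFS) {X : Set V} (hX : t.root ∉ X)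
    (hsub : ∀ x ∈ X, t.Anc a x → x = a) (hz : z ∈ t.subtree a) :
    Reach t.ends (t.treeEdge '' X) z a :=
  ht.reach_of_anc hX hz fun x hx hax _ => hsub x hx hax

theorem IsDFS.reach_root_of_not_mem_subtree (ht : t.IsDFS) {X : Set V} (hX : t.root ∉ X)
    (hsub : ∀ x ∈ X, t.Anc a x) (hz : z ∉ t.subtree a) :
    Reach t.ends (t.treeEdge '' X) z t.root :=
  ht.reach_of_anc hX (ht.root_anc z) fun x hx _ hxz => absurd (anc_trans (hsub x hx) hxz) hz

section UnrelatedPair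

variable {u v w : V}

theorem disjoint_B (h1 : ¬ t.Anc u v) (h2 : ¬ t.Anc v u) : Disjoint (t.B u) (t.B v) :=
  Set.disjoint_left.2 fun _ heu hev => (anc_total heu.2.1 hev.2.1).elim h1 h2

theorem IsDFS.parent_mem_subtree_diff (ht : t.IsDFS) (hu : u ≠ t.root) (h2 : ¬ t.Anc v u)
    (hwu : t.Anc w u) (hne : w ≠ u) :
    t.parent u ∈ t.subtree w \ (t.subtree u ∪ t.subtree v) := by
  simp only [Set.mem_sdiff, Set.mem_union, mem_subtree, not_or]
  exact ⟨anc_parent_of_anc_of_ne hwu hne, ht.not_anc_parent hu,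
    fun h => h2 (anc_of_anc_parent hu h)⟩

theorem parent_mem_subtree_diff_iff (hx : x ≠ t.root) (hxu : x ≠ u) (hxv : x ≠ v)
    (hxw : x ≠ w) : t.parent x ∈ t.subtree w \ (t.subtree u ∪ t.subtree v) ↔
      x ∈ t.subtree w \ (t.subtree u ∪ t.subtree v) := by
  simp only [Set.mem_sdiff, Set.mem_union, mem_subtree, anc_parent_iff hx (Ne.symm hxu),
    anc_parent_iff hx (Ne.symm hxv), anc_parent_iff hx (Ne.symm hxw)]

theorem IsDFS.ends_mem_subtree_diff_iff (ht : t.IsDFS) (h1 : ¬ t.Anc u v) (h2 : ¬ t.Anc v u)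
    (hwu : t.Anc w u) (hwv : t.Anc w v) {e : E} (he : ¬ t.IsTreeEdge e) :
    ((t.ends e).1 ∈ t.subtree w \ (t.subtree u ∪ t.subtree v) ↔
      (t.ends e).2 ∈ t.subtree w \ (t.subtree u ∪ t.subtree v)) ↔
      (e ∈ t.B w ↔ e ∈ t.B u ∪ t.B v) := by
  rw [Set.mem_union, ht.mem_B_iff he, ht.mem_B_iff he, ht.mem_B_iff he]
  simp only [Set.mem_sdiff, Set.mem_union, mem_subtree]
  have hdown : ∀ c, t.Anc c (t.ends e).2 → t.Anc c (t.ends e).1 :=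
    fun c h => anc_trans h (ht.anc_ends e)
  have hunrel : ¬ (t.Anc u (t.ends e).1 ∧ t.Anc v (t.ends e).1) :=
    fun ⟨hu, hv⟩ => (anc_total hu hv).elim h1 h2
  have hu1 := hdown u; have hv1 := hdown v; have hw1 := hdown w
  have hwu1 := fun h => anc_trans (z := (t.ends e).1) hwu h
  have hwv1 := fun h => anc_trans (z := (t.ends e).1) hwv h
  have hwu2 := fun h => anc_trans (z := (t.ends e).2) hwu h
  have hwv2 := fun h => anc_trans (z := (t.ends e).2) hwv h
  by_cases t.Anc u (t.ends e).1 <;> by_cases t.Anc v (t.ends e).1 <;>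
    by_cases t.Anc w (t.ends e).1 <;> by_cases t.Anc u (t.ends e).2 <;>
    by_cases t.Anc v (t.ends e).2 <;> by_cases t.Anc w (t.ends e).2 <;> simp_all

theorem IsDFS.separatedBy_subtree_diff_iff (ht : t.IsDFS) (hu : u ≠ t.root) (hv : v ≠ t.root)
    (hw : w ≠ t.root) (h1 : ¬ t.Anc u v) (h2 : ¬ t.Anc v u) (hwu : t.Anc w u)
    (hwv : t.Anc w v) :
    SeparatedBy t.ends (t.treeEdge '' {u, v, w}) (t.subtree w \ (t.subtree u ∪ t.subtree v)) ↔
      t.B w = t.B u ∪ t.B v := by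
  have hnB : ∀ x ≠ t.root, ∀ y, t.treeEdge x ∉ t.B y := fun x hx _ h => h.1 ⟨x, hx, rfl⟩
  have key : ∀ e ∉ t.treeEdge '' {u, v, w},
      ((t.ends e).1 ∈ t.subtree w \ (t.subtree u ∪ t.subtree v) ↔
        (t.ends e).2 ∈ t.subtree w \ (t.subtree u ∪ t.subtree v)) ↔
        (e ∈ t.B w ↔ e ∈ t.B u ∪ t.B v) := by
    intro e he
    by_cases hT : t.IsTreeEdge e
    · obtain ⟨x, hx, rfl⟩ := hT
      have hxS : x ≠ u ∧ x ≠ v ∧ x ≠ w := by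
        simpa [not_or] using fun h => he ⟨x, h, rfl⟩
      rw [ht.tree_ends x hx, parent_mem_subtree_diff_iff hx hxS.1 hxS.2.1 hxS.2.2]
      simp [hnB x hx]
    · exact ht.ends_mem_subtree_diff_iff h1 h2 hwu hwv hT
  refine ⟨fun h => Set.ext fun e => ?_, fun h e he => (key e he).2 (h ▸ Iff.rfl)⟩
  by_cases he : e ∈ t.treeEdge '' {u, v, w}
  · obtain ⟨x, hx, rfl⟩ := he
    have hxr : x ≠ t.root := by rcases hx with rfl | rfl | rfl <;> assumption
    simp [hnB x hxr]
  · exact (key e he).1 (h e he)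

theorem IsDFS.setOf_reach_eq_subtree_diff (ht : t.IsDFS) (h3 : GraphKConn t.ends 3)
    (hu : u ≠ t.root) (hv : v ≠ t.root) (hw : w ≠ t.root) (h1 : ¬ t.Anc u v)
    (h2 : ¬ t.Anc v u) (hwu : t.Anc w u) (hwv : t.Anc w v)
    (hcut : IsCutSet t.ends (t.treeEdge '' {u, v, w})) :
    {y | Reach t.ends (t.treeEdge '' {u, v, w}) w y} =
      t.subtree w \ (t.subtree u ∪ t.subtree v) := by
  classical
  have hroot : t.root ∉ ({u, v, w} : Set V) := by
    simp only [Set.mem_insert_iff, Set.mem_singleton_iff, not_or]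
    exact ⟨hu.symm, hv.symm, hw.symm⟩
  have hwu' : w ≠ u := fun h => h1 (h ▸ hwv)
  have hwv' : w ≠ v := fun h => h2 (h ▸ hwu)
  have hW : ∀ z ∈ t.subtree w \ (t.subtree u ∪ t.subtree v),
      Reach t.ends (t.treeEdge '' {u, v, w}) w z := by
    rintro z ⟨hwz, hz⟩
    refine (ht.reach_of_anc hroot hwz ?_).symm
    rintro x (rfl | rfl | rfl) - hxz
    exacts [absurd (Or.inl hxz) hz, absurd (Or.inr hxz) hz, rfl]
  have hF : (↑({t.treeEdge u, t.treeEdge v, t.treeEdge w} : Finset E) : Set E) =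
      t.treeEdge '' {u, v, w} := by
    simp [Set.image_insert_eq]
  have hcross : ∀ x ∈ ({u, v, w} : Set V),
      ¬ Reach t.ends (t.treeEdge '' {u, v, w}) x (t.parent x) := by
    intro x hx
    have hxF : t.treeEdge x ∈ ({t.treeEdge u, t.treeEdge v, t.treeEdge w} : Finset E) := by
      rcases hx with rfl | rfl | rfl <;> simp
    simpa [hF, ht.tree_ends x (ne_of_mem_of_not_mem hx hroot)] using
      h3.not_reach_of_isCutSet Finset.card_le_three (hF ▸ hcut) hxF
  have hsub : ∀ x ∈ ({u, v, w} : Set V), t.Anc w x := by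
    rintro x (rfl | rfl | rfl)
    exacts [hwu, hwv, anc_refl _]
  refine Set.Subset.antisymm (fun z (hz : Reach _ _ w z) => ⟨?_, ?_⟩) hW
  · by_contra hzw
    exact hcross w (by simp) (hz.trans (ht.reach_root_of_not_mem_subtree hroot hsub hzw) |>.trans
      (ht.reach_root_of_not_mem_subtree hroot hsub (ht.not_anc_parent hw)).symm)
  · rintro (hzu | hzv)
    · refine hcross u (by simp) ((hz.trans (ht.reach_of_mem_subtree hroot ?_ hzu)).symm.trans
        (hW _ (ht.parent_mem_subtree_diff hu h2 hwu hwu')))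
      rintro x (rfl | rfl | rfl) hux
      exacts [rfl, absurd hux h1, ht.anc_antisymm hwu hux]
    · refine hcross v (by simp) ((hz.trans (ht.reach_of_mem_subtree hroot ?_ hzv)).symm.trans
        (hW _ (by simpa [or_comm] using ht.parent_mem_subtree_diff hv h1 hwv hwv')))
      rintro x (rfl | rfl | rfl) hvx
      exacts [absurd hvx h2, rfl, ht.anc_antisymm hwv hvx]

end UnrelatedPair

end DFSTree

/-- Let `u`, `v` be unrelated in the tree and `w` a common ancestor of both. Then
`{(u, p(u)), (v, p(v)), (w, p(w))}` is a 3-edge cut iff `B(w) = B(u) ⊔ B(v)`. -/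
theorem cut_three_tree_edges_unrelated (t : DFSTree V E) (ht : t.IsDFS)
    (h3 : GraphKConn t.ends 3) (u v w : V)
    (hu : u ≠ t.root) (hv : v ≠ t.root) (hw : w ≠ t.root)
    (h1 : ¬ t.Anc u v) (h2 : ¬ t.Anc v u)
    (hwu : t.Anc w u) (hwv : t.Anc w v) :
    IsCutSet t.ends {t.treeEdge u, t.treeEdge v, t.treeEdge w} ↔
      (t.B w = t.B u ∪ t.B v ∧ Disjoint (t.B u) (t.B v)) := by
  have hS : ({t.treeEdge u, t.treeEdge v, t.treeEdge w} : Set E) = t.treeEdge '' {u, v, w} := by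
    simp [Set.image_insert_eq]
  rw [and_iff_left (DFSTree.disjoint_B h1 h2), hS,
    ← ht.separatedBy_subtree_diff_iff hu hv hw h1 h2 hwu hwv]
  constructor
  · intro hcut
    rw [← ht.setOf_reach_eq_subtree_diff h3 hu hv hw h1 h2 hwu hwv hcut]
    exact separatedBy_setOf_reach w
  · intro hW
    refine ⟨w, u, fun hreach => ?_⟩
    have huW := hW.mem_of_reach ⟨DFSTree.anc_refl w, ?_⟩ hreach
    · exact huW.2 (Or.inl (DFSTree.anc_refl u))
    · rintro (h | h)
      exacts [h1 (DFSTree.anc_trans h hwv), h2 (DFSTree.anc_trans h hwu)]
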